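/- arXiv:1210.2124 — 2 statements merged into one kernel-verified Lean document; each statement's English description precedes it below -/
import Mathlib

section
/- Let X be a compact subset of a Banach space E, E₁ a Banach space compactly embedded in E, and L : X → X a map with L(X) = X satisfying ‖L(x₁) - L(x₂)‖_{E₁} ≤ c‖x₁ - x₂‖_E for all x₁, x₂ ∈ X. Then X has finite fractal (box-counting) dimension in E, bounded by H_{1/(4c)}(B_{E₁}(0,1)), the Kolmogorov entropy at scale 1/(4c) of the unit ball of E₁ viewed in E. -/
/-!
Cover `X` by `N_ε(X)` balls of radius `ε`. Since `X = j(L(Y))` and `L` stretches distances by at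
most `c` from `E` to `E₁`, the part of `X` coming from the points of one such ball lies in a
translate of `2cε • j(B_{E₁}(0,1))`, which is covered by `N := N_{1/(4c)}(j(B_{E₁}(0,1)))` balls of
radius `ε/2`. Hence `N_{ε/2}(X) ≤ N · N_ε(X)`, so `N_{2⁻ᵏ}(X) ≤ N_1(X) · Nᵏ` and `dim_F X ≤ log₂ N`.
-/

open Metric Filter

/-- Minimal number of balls of radius `ε` (in the metric space `E`) needed to cover `X`. -/
noncomputable def coverNum {E : Type*} [MetricSpace E] (ε : ℝ) (X : Set E) : ℕ :=
  sInf {n : ℕ | ∃ s : Finset E, s.card = n ∧ X ⊆ ⋃ c ∈ s, Metric.ball c ε}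

/-- Kolmogorov `ε`-entropy: `H_ε(X) = log₂ N_ε(X)`. -/
noncomputable def kEntropy {E : Type*} [MetricSpace E] (ε : ℝ) (X : Set E) : ℝ :=
  Real.logb 2 (coverNum ε X)

/-- Fractal (box-counting) dimension:
`dim_F X = limsup_{ε → 0⁺} H_ε(X) / log₂ ε⁻¹`. -/
noncomputable def fractalDim {E : Type*} [MetricSpace E] (X : Set E) : ℝ :=
  limsup (fun ε : ℝ => kEntropy ε X / Real.logb 2 ε⁻¹) (nhdsWithin 0 (Set.Ioi 0))

open Topology

section MetricSpace

variable {E : Type*} [MetricSpace E]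

lemma coverNum_le_card {X : Set E} {ε : ℝ} (s : Finset E) (h : X ⊆ ⋃ c ∈ s, ball c ε) :
    coverNum ε X ≤ s.card :=
  Nat.sInf_le ⟨s, rfl, h⟩

lemma TotallyBounded.exists_card_eq_coverNum {X : Set E} (hX : TotallyBounded X) {ε : ℝ}
    (hε : 0 < ε) : ∃ s : Finset E, s.card = coverNum ε X ∧ X ⊆ ⋃ c ∈ s, ball c ε := by
  obtain ⟨t, ht, hXt⟩ := totallyBounded_iff.mp hX ε hε
  exact Nat.sInf_mem (s := {n | ∃ s : Finset E, s.card = n ∧ X ⊆ ⋃ c ∈ s, ball c ε})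
    ⟨ht.toFinset.card, ht.toFinset, rfl, by simpa using hXt⟩

lemma coverNum_mono {X X' : Set E} (hX' : TotallyBounded X') {ε : ℝ} (hε : 0 < ε)
    (h : X ⊆ X') : coverNum ε X ≤ coverNum ε X' := by
  obtain ⟨s, hs, hX's⟩ := hX'.exists_card_eq_coverNum hε
  exact hs ▸ coverNum_le_card s (h.trans hX's)

lemma coverNum_anti {X : Set E} (hX : TotallyBounded X) {ε ε' : ℝ} (hε : 0 < ε) (h : ε ≤ ε') :
    coverNum ε' X ≤ coverNum ε X := by
  obtain ⟨s, hs, hXs⟩ := hX.exists_card_eq_coverNum hε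
  exact hs ▸ coverNum_le_card s (hXs.trans (Set.iUnion₂_mono fun c _ => ball_subset_ball h))

lemma logb_two_natCast_nonneg (n : ℕ) : 0 ≤ Real.logb 2 n :=
  div_nonneg (Real.log_natCast_nonneg n) (Real.log_nonneg one_le_two)

lemma kEntropy_nonneg (ε : ℝ) (X : Set E) : 0 ≤ kEntropy ε X :=
  logb_two_natCast_nonneg _

lemma coverNum_le_card_mul_of_subset_biUnion {ι : Type*} {X : Set E} {A : ι → Set E}
    (hA : ∀ i, TotallyBounded (A i)) {ε : ℝ} (hε : 0 < ε) {N : ℕ} (hAN : ∀ i, coverNum ε (A i) ≤ N)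
    (s : Finset ι) (hX : X ⊆ ⋃ i ∈ s, A i) : coverNum ε X ≤ s.card * N := by
  classical
  choose t ht hAt using fun i => (hA i).exists_card_eq_coverNum hε
  calc coverNum ε X ≤ (s.biUnion t).card := coverNum_le_card _ <| hX.trans <| by
        simpa only [Finset.set_biUnion_biUnion] using Set.iUnion₂_mono fun i _ => hAt i
    _ ≤ ∑ i ∈ s, (t i).card := Finset.card_biUnion_le
    _ ≤ s.card * N := by
        simpa only [smul_eq_mul, ht] using Finset.sum_le_card_nsmul s _ N fun i _ => hAN i

lemma coverNum_image_le_of_lipschitzWith {F : Type*} [MetricSpace F] {f : E → F} {K : NNReal}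
    (hf : LipschitzWith K f) (hK : K ≠ 0) {X : Set E} (hX : TotallyBounded X) {ε : ℝ}
    (hε : 0 < ε) : coverNum (K * ε) (f '' X) ≤ coverNum ε X := by
  classical
  obtain ⟨s, hs, hXs⟩ := hX.exists_card_eq_coverNum hε
  calc coverNum (K * ε) (f '' X) ≤ (s.image f).card := coverNum_le_card _ <| by
        rintro _ ⟨x, hx, rfl⟩
        obtain ⟨c, hc, hxc⟩ := Set.mem_iUnion₂.mp (hXs hx)
        exact Set.mem_iUnion₂.mpr ⟨f c, Finset.mem_image_of_mem f hc, hf.mapsTo_ball hK c ε hxc⟩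
    _ ≤ coverNum ε X := hs ▸ Finset.card_image_le

lemma coverNum_div_two_pow_le {X : Set E} {N : ℕ}
    (hN : ∀ ε > 0, coverNum (ε / 2) X ≤ coverNum ε X * N) {ε : ℝ} (hε : 0 < ε) (k : ℕ) :
    coverNum (ε / 2 ^ k) X ≤ coverNum ε X * N ^ k := by
  induction k with
  | zero => simp
  | succ k ih =>
    calc coverNum (ε / 2 ^ (k + 1)) X = coverNum (ε / 2 ^ k / 2) X := by rw [pow_succ, div_div]
      _ ≤ coverNum (ε / 2 ^ k) X * N := hN _ (by positivity)
      _ ≤ coverNum ε X * N ^ k * N := Nat.mul_le_mul_right _ ih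
      _ = coverNum ε X * N ^ (k + 1) := by ring

lemma logb_two_le_of_le_mul_pow {m C N k : ℕ} (h : m ≤ C * N ^ k) :
    Real.logb 2 m ≤ Real.logb 2 C + k * Real.logb 2 N := by
  rcases Nat.eq_zero_or_pos m with rfl | hm
  · simpa using add_nonneg (logb_two_natCast_nonneg C)
      (mul_nonneg k.cast_nonneg (logb_two_natCast_nonneg N))
  have hCN : 0 < C * N ^ k := hm.trans_le h
  calc Real.logb 2 m ≤ Real.logb 2 (C * N ^ k : ℕ) :=
        Real.logb_le_logb_of_le one_lt_two (by exact_mod_cast hm) (by exact_mod_cast h)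
    _ = Real.logb 2 C + k * Real.logb 2 N := by
        push_cast
        rw [Real.logb_mul (by exact_mod_cast (Nat.pos_of_mul_pos_right hCN).ne')
          (by exact_mod_cast (Nat.pos_of_mul_pos_left hCN).ne'), Real.logb_pow]

lemma kEntropy_le_of_coverNum_half_le {X : Set E} (hX : TotallyBounded X) {N : ℕ}
    (hN : ∀ ε > 0, coverNum (ε / 2) X ≤ coverNum ε X * N) {ε : ℝ} (hε : 0 < ε) (hε₁ : ε ≤ 1) :
    kEntropy ε X ≤ kEntropy 1 X + (Real.logb 2 ε⁻¹ + 1) * Real.logb 2 N := by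
  have hℓ : 0 ≤ Real.logb 2 ε⁻¹ := Real.logb_nonneg one_lt_two (one_le_inv₀ hε |>.mpr hε₁)
  set k := ⌈Real.logb 2 ε⁻¹⌉₊
  have hk : 1 / 2 ^ k ≤ ε := by
    rw [one_div, inv_le_comm₀ (by positivity) hε, ← Real.rpow_natCast,
      ← Real.logb_le_iff_le_rpow one_lt_two (inv_pos.mpr hε)]
    exact Nat.le_ceil _
  have hcover : coverNum ε X ≤ coverNum 1 X * N ^ k :=
    (coverNum_anti hX (by positivity) hk).trans (coverNum_div_two_pow_le hN one_pos k)
  calc kEntropy ε X ≤ kEntropy 1 X + k * Real.logb 2 N := logb_two_le_of_le_mul_pow hcover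
    _ ≤ kEntropy 1 X + (Real.logb 2 ε⁻¹ + 1) * Real.logb 2 N := by
        gcongr
        · exact logb_two_natCast_nonneg N
        · exact (Nat.ceil_lt_add_one hℓ).le

theorem fractalDim_le_of_coverNum_half_le {X : Set E} (hX : TotallyBounded X) {N : ℕ}
    (hN : ∀ ε > 0, coverNum (ε / 2) X ≤ coverNum ε X * N) : fractalDim X ≤ Real.logb 2 N := by
  set H := Real.logb 2 N
  set ℓ : ℝ → ℝ := fun ε => Real.logb 2 ε⁻¹
  have hℓ : Tendsto ℓ (𝓝[>] 0) atTop :=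
    (Real.tendsto_logb_atTop one_lt_two).comp tendsto_inv_nhdsGT_zero
  have hbound : Tendsto (fun ε => H + (kEntropy 1 X + H) / ℓ ε) (𝓝[>] 0) (𝓝 H) := by
    simpa using tendsto_const_nhds.add (tendsto_const_nhds.div_atTop hℓ)
  have hsmall : ∀ᶠ ε in 𝓝[>] 0, ε ∈ Set.Ioo (0 : ℝ) 1 := Ioo_mem_nhdsGT one_pos
  have hpos : ∀ᶠ ε in 𝓝[>] 0, 0 < ℓ ε := hℓ.eventually_gt_atTop 0
  have hle : ∀ᶠ ε in 𝓝[>] 0, kEntropy ε X / ℓ ε ≤ H + (kEntropy 1 X + H) / ℓ ε := by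
    filter_upwards [hsmall, hpos] with ε ⟨hε, hε₁⟩ hℓε
    rw [div_le_iff₀ hℓε, add_mul, div_mul_cancel₀ _ hℓε.ne']
    linarith [kEntropy_le_of_coverNum_half_le hX hN hε hε₁.le]
  have hnonneg : ∀ᶠ ε in 𝓝[>] 0, 0 ≤ kEntropy ε X / ℓ ε := by
    filter_upwards [hpos] with ε hℓε
    exact div_nonneg (kEntropy_nonneg ε X) hℓε.le
  calc fractalDim X ≤ limsup (fun ε => H + (kEntropy 1 X + H) / ℓ ε) (𝓝[>] 0) :=
        limsup_le_limsup hle (isCoboundedUnder_le_of_eventually_le _ hnonneg)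
          hbound.isBoundedUnder_le
    _ = H := hbound.limsup_eq

end MetricSpace

section NormedSpace

variable {E E₁ : Type*} [NormedAddCommGroup E] [NormedSpace ℝ E]
  [NormedAddCommGroup E₁] [NormedSpace ℝ E₁]

lemma image_ball_subset_image_unitBall (j : E₁ →L[ℝ] E) (v : E₁) {r : ℝ} (hr : 0 < r) :
    j '' ball v r ⊆ (fun w => j v + r • w) '' (j '' ball 0 1) := by
  rintro _ ⟨u, hu, rfl⟩
  refine ⟨j (r⁻¹ • (u - v)), ⟨r⁻¹ • (u - v), ?_, rfl⟩, ?_⟩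
  · rw [mem_ball_zero_iff, norm_smul, norm_inv, Real.norm_of_nonneg hr.le, inv_mul_lt_iff₀ hr,
      mul_one, ← dist_eq_norm]
    exact hu
  · simp only [map_smul, map_sub, smul_inv_smul₀ hr.ne', add_sub_cancel]

lemma coverNum_le_of_subset_image_ball (j : E₁ →L[ℝ] E)
    (hB : TotallyBounded (j '' ball 0 1)) {S : Set E} {v : E₁} {r ρ : ℝ} (hr : 0 < r)
    (hρ : 0 < ρ) (hS : S ⊆ j '' ball v r) : coverNum (r * ρ) S ≤ coverNum ρ (j '' ball 0 1) := by
  set g : E → E := fun w => j v + r • w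
  have hg : LipschitzWith ‖r‖₊ g := LipschitzWith.of_dist_le_mul fun x y => by
    rw [dist_add_left, dist_smul₀, coe_nnnorm]
  calc coverNum (r * ρ) S ≤ coverNum (r * ρ) (g '' (j '' ball 0 1)) :=
        coverNum_mono (hB.image hg.uniformContinuous) (by positivity)
          (hS.trans (image_ball_subset_image_unitBall j v hr))
    _ ≤ coverNum ρ (j '' ball 0 1) := by
        simpa only [coe_nnnorm, Real.norm_of_nonneg hr.le] using
          coverNum_image_le_of_lipschitzWith hg (by simpa using hr.ne') hB hρ

lemma coverNum_half_le_mul_of_lipschitz (j : E₁ →L[ℝ] E) (hB : TotallyBounded (j '' ball 0 1))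
    {X : Set E} (hX : TotallyBounded X) {Y : Set E₁} (hYX : j '' Y = X) {L : E₁ → E₁}
    (hLY : L '' Y = Y) {c : ℝ} (hc : 0 < c)
    (hLip : ∀ y₁ ∈ Y, ∀ y₂ ∈ Y, ‖L y₁ - L y₂‖ ≤ c * ‖j y₁ - j y₂‖) {ε : ℝ} (hε : 0 < ε) :
    coverNum (ε / 2) X ≤ coverNum ε X * coverNum (1 / (4 * c)) (j '' ball 0 1) := by
  obtain ⟨s, hs, hXs⟩ := hX.exists_card_eq_coverNum hε
  set A : E → Set E := fun a => j '' (L '' (Y ∩ j ⁻¹' ball a ε))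
  have hAX : ∀ a, A a ⊆ X := fun a =>
    hYX ▸ Set.image_mono ((Set.image_mono Set.inter_subset_left).trans hLY.subset)
  have hXA : X ⊆ ⋃ a ∈ s, A a := by
    intro x hx
    rw [← hYX, ← hLY] at hx
    obtain ⟨_, ⟨y, hy, rfl⟩, rfl⟩ := hx
    obtain ⟨a, ha, hya⟩ := Set.mem_iUnion₂.mp (hXs (hYX ▸ Set.mem_image_of_mem j hy))
    exact Set.mem_iUnion₂.mpr ⟨a, ha, Set.mem_image_of_mem j (Set.mem_image_of_mem L ⟨hy, hya⟩)⟩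
  have hAN : ∀ a, coverNum (ε / 2) (A a) ≤ coverNum (1 / (4 * c)) (j '' ball 0 1) := by
    intro a
    rcases (Y ∩ j ⁻¹' ball a ε).eq_empty_or_nonempty with hempty | ⟨y₀, hy₀, hy₀a⟩
    · exact (coverNum_le_card ∅ (by simp [A, hempty])).trans (Nat.zero_le _)
    have hAball : A a ⊆ j '' ball (L y₀) (2 * c * ε) := by
      rintro _ ⟨_, ⟨y, ⟨hy, hya⟩, rfl⟩, rfl⟩
      refine Set.mem_image_of_mem j ?_
      have hjy : ‖j y - j y₀‖ < 2 * ε := by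
        rw [← dist_eq_norm]
        linarith [dist_triangle_right (j y) (j y₀) a, mem_ball.mp hya, mem_ball.mp hy₀a]
      rw [mem_ball, dist_eq_norm]
      calc ‖L y - L y₀‖ ≤ c * ‖j y - j y₀‖ := hLip y hy y₀ hy₀
        _ < c * (2 * ε) := mul_lt_mul_of_pos_left hjy hc
        _ = 2 * c * ε := by ring
    have hscale : 2 * c * ε * (1 / (4 * c)) = ε / 2 := by field_simp; ring
    exact hscale ▸ coverNum_le_of_subset_image_ball j hB (by positivity) (by positivity) hAball
  exact hs ▸ coverNum_le_card_mul_of_subset_biUnion (fun a => hX.subset (hAX a))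
    (half_pos hε) hAN s hXA

end NormedSpace

theorem stmt8_general {E E₁ : Type*}
    [NormedAddCommGroup E] [NormedSpace ℝ E]
    [NormedAddCommGroup E₁] [NormedSpace ℝ E₁]
    (j : E₁ →L[ℝ] E) (hcpt : IsCompactOperator j)
    (X : Set E) (hX : IsCompact X)
    (Y : Set E₁) (hYX : j '' Y = X)
    (L : E₁ → E₁) (hLY : L '' Y = Y)
    (c : ℝ) (hc : 0 < c)
    (hLip : ∀ y₁ ∈ Y, ∀ y₂ ∈ Y, ‖L y₁ - L y₂‖ ≤ c * ‖j y₁ - j y₂‖) :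
    fractalDim X ≤ kEntropy (1 / (4 * c)) (j '' Metric.ball 0 1) := by
  have hB : TotallyBounded (j '' ball 0 1) :=
    (hcpt.isCompact_closure_image_ball 1).totallyBounded.subset subset_closure
  exact fractalDim_le_of_coverNum_half_le hX.totallyBounded fun ε hε =>
    coverNum_half_le_mul_of_lipschitz j hB hX.totallyBounded hYX hLY hc hLip hε

/-- let `X` be a compact subset of a Banach space `E`, `E₁` a Banach space
compactly embedded in `E` (via an injective compact operator `j`), and `L` a map of `X`
onto itself (realized through `j` on a set `Y` with `j '' Y = X`, `L '' Y = Y`) that is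
Lipschitz from the `E`-metric to the `E₁`-metric with constant `c`. Then the fractal
dimension of `X` in `E` is bounded by `H_{1/(4c)}(B_{E₁}(0,1))`, the Kolmogorov entropy
at scale `1/(4c)` of the image in `E` of the unit ball of `E₁`. -/
theorem stmt8 {E E₁ : Type*}
    [NormedAddCommGroup E] [NormedSpace ℝ E] [CompleteSpace E]
    [NormedAddCommGroup E₁] [NormedSpace ℝ E₁] [CompleteSpace E₁]
    (j : E₁ →L[ℝ] E) (hinj : Function.Injective j) (hcpt : IsCompactOperator j)
    (X : Set E) (hX : IsCompact X)
    (Y : Set E₁) (hYX : j '' Y = X)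
    (L : E₁ → E₁) (hLY : L '' Y = Y)
    (c : ℝ) (hc : 0 < c)
    (hLip : ∀ y₁ ∈ Y, ∀ y₂ ∈ Y, ‖L y₁ - L y₂‖ ≤ c * ‖j y₁ - j y₂‖) :
    fractalDim X ≤ kEntropy (1 / (4 * c)) (j '' Metric.ball 0 1) :=
  stmt8_general j hcpt X hX Y hYX L hLY c hc hLip
end

section
/- If a closed semigroup Σ(t) on a metric space possesses a connected compact attracting set K with Σ(t)K ⊆ K for all sufficiently large t, then Σ(t) has a connected global attractor A ⊆ K (the global attractor is the ω-limit set of K: compact, invariant, and attracting all bounded sets). -/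
/-
The attractor is `A = ⋂ s ≥ 0, S s '' K`. Since the compact set `K` attracts bounded sets, every
sequence `S (t n) (x n)` with `t n → ∞` and `x n` in a bounded set has a subsequence converging to
a point of `K`; closedness of `S s` then puts every such limit in `S s '' K` for all `s ≥ 0`, that
is, in `A`. This gives the invariance of `A` and the attraction of bounded sets. Past the
absorption time `S t` maps the compact set `K` into itself with closed graph, hence continuously, so
`A` is a directed intersection of the compact connected sets `S t '' K`. Minimality holds because
every point of `A` lies in `S t '' K` for arbitrarily large `t`.
-/

open Filter Topology Set Metric

theorem IsPreconnected.iInter_of_directed_isCompact {X ι : Type*} [TopologicalSpace X]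
    [T2Space X] [Nonempty ι] {V : ι → Set X} (hV : Directed (· ⊇ ·) V)
    (hc : ∀ i, IsCompact (V i)) (hconn : ∀ i, IsPreconnected (V i)) :
    IsPreconnected (⋂ i, V i) := by
  have hclosed : IsClosed (⋂ i, V i) := isClosed_iInter fun i => (hc i).isClosed
  have hcompact : IsCompact (⋂ i, V i) :=
    (hc (Classical.arbitrary ι)).of_isClosed_subset hclosed (iInter_subset _ _)
  rw [isPreconnected_iff_subset_of_fully_disjoint_closed hclosed]
  intro u v hu hv huv hdisj
  obtain ⟨U, W, hU, hW, huU, hvW, hUW⟩ :=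
    SeparatedNhds.of_isCompact_isCompact (hcompact.inter_right hu) (hcompact.inter_right hv)
      (hdisj.mono inter_subset_right inter_subset_right)
  obtain ⟨i, hi⟩ := exists_subset_nhds_of_isCompact hV hc fun x hx =>
    (hU.union hW).mem_nhds ((huv hx).imp (fun h => huU ⟨hx, h⟩) fun h => hvW ⟨hx, h⟩)
  rcases (hconn i).subset_or_subset hU hW hUW hi with h | h
  · exact .inl fun x hx => (huv hx).resolve_right fun hxv =>
      hUW.ne_of_mem (h (mem_iInter.1 hx i)) (hvW ⟨hx, hxv⟩) rfl
  · exact .inr fun x hx => (huv hx).resolve_left fun hxu =>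
      hUW.ne_of_mem (huU ⟨hx, hxu⟩) (h (mem_iInter.1 hx i)) rfl

theorem IsConnected.iInter_of_directed_isCompact {X ι : Type*} [TopologicalSpace X]
    [T2Space X] [Nonempty ι] {V : ι → Set X} (hV : Directed (· ⊇ ·) V)
    (hc : ∀ i, IsCompact (V i)) (hconn : ∀ i, IsConnected (V i)) :
    IsConnected (⋂ i, V i) :=
  ⟨IsCompact.nonempty_iInter_of_directed_nonempty_isCompact_isClosed V hV
      (fun i => (hconn i).nonempty) hc fun i => (hc i).isClosed,
    .iInter_of_directed_isCompact hV hc fun i => (hconn i).isPreconnected⟩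

theorem continuousOn_of_seq_closed_graph {X Y : Type*} [TopologicalSpace X]
    [FirstCountableTopology X] [TopologicalSpace Y] [FirstCountableTopology Y]
    {f : X → Y} {s : Set X} {K : Set Y} (hK : IsCompact K) (hf : MapsTo f s K)
    (hgraph : ∀ (u : ℕ → X) (x : X) (y : Y),
      Tendsto u atTop (𝓝 x) → Tendsto (f ∘ u) atTop (𝓝 y) → f x = y) :
    ContinuousOn f s := by
  intro x _
  rw [ContinuousWithinAt, tendsto_iff_seq_tendsto]
  intro u hu
  obtain ⟨hux, hus⟩ := tendsto_nhdsWithin_iff.1 hu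
  refine hK.tendsto_nhds_of_unique_mapClusterPt (hus.mono fun n hn => hf hn) fun y _ hy => ?_
  obtain ⟨φ, hφ, hlim⟩ := hy.tendsto_subseq
  exact (hgraph (u ∘ φ) x y (hux.comp hφ.tendsto_atTop) hlim).symm

theorem IsCompact.tendsto_subseq_of_eventually_near {X : Type*} [PseudoMetricSpace X]
    {K : Set X} {p : ℕ → X} (hK : IsCompact K)
    (hp : ∀ ε > 0, ∀ᶠ n in atTop, ∃ k ∈ K, dist (p n) k < ε) :
    ∃ y ∈ K, ∃ φ : ℕ → ℕ, StrictMono φ ∧ Tendsto (p ∘ φ) atTop (𝓝 y) := by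
  obtain ⟨_, k₀, hk₀, _⟩ := (hp 1 one_pos).exists
  choose k hkK hk using fun n => hK.exists_infDist_eq_dist ⟨k₀, hk₀⟩ (p n)
  have hdist : Tendsto (fun n => dist (k n) (p n)) atTop (𝓝 0) :=
    Metric.tendsto_nhds.2 fun ε hε => (hp ε hε).mono fun n ⟨k', hk', hd⟩ => by
      rw [Real.dist_0_eq_abs, abs_of_nonneg dist_nonneg, dist_comm, ← hk n]
      exact (infDist_le_dist_of_mem hk').trans_lt hd
  obtain ⟨y, hy, φ, hφ, hkφ⟩ := hK.tendsto_subseq hkK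
  exact ⟨y, hy, φ, hφ, hkφ.congr_dist (hdist.comp hφ.tendsto_atTop)⟩

def AttractsBounded {X : Type*} [PseudoMetricSpace X] (S : ℝ → X → X) (K : Set X) : Prop :=
  ∀ B : Set X, Bornology.IsBounded B → ∀ ε > 0, ∃ T, ∀ t ≥ T,
    ∀ x ∈ B, ∃ k ∈ K, dist (S t x) k < ε

structure IsClosedSemigroup {X : Type*} [TopologicalSpace X] (S : ℝ → X → X) : Prop where
  add : ∀ s ≥ (0 : ℝ), ∀ t ≥ (0 : ℝ), S (s + t) = S s ∘ S t
  closed : ∀ t ≥ (0 : ℝ), ∀ (u : ℕ → X) (x y : X),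
    Tendsto u atTop (𝓝 x) → Tendsto (fun n => S t (u n)) atTop (𝓝 y) → S t x = y

section Semigroup

variable {X : Type*} [MetricSpace X] {S : ℝ → X → X} {K : Set X}

theorem IsClosedSemigroup.apply_add (hS : IsClosedSemigroup S) {s t : ℝ} (hs : 0 ≤ s)
    (ht : 0 ≤ t) (x : X) : S (s + t) x = S s (S t x) :=
  congrFun (hS.add s hs t ht) x

theorem AttractsBounded.tendsto_subseq (hattr : AttractsBounded S K) (hK : IsCompact K)
    {B : Set X} (hB : Bornology.IsBounded B) {t : ℕ → ℝ} (ht : Tendsto t atTop atTop)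
    {x : ℕ → X} (hx : ∀ n, x n ∈ B) :
    ∃ y ∈ K, ∃ φ : ℕ → ℕ, StrictMono φ ∧
      Tendsto (fun n => S (t (φ n)) (x (φ n))) atTop (𝓝 y) :=
  hK.tendsto_subseq_of_eventually_near fun ε hε =>
    let ⟨T, hT⟩ := hattr B hB ε hε
    (ht.eventually_ge_atTop T).mono fun n hn => hT _ hn _ (hx n)

theorem IsClosedSemigroup.mem_iInter_image_of_tendsto (hS : IsClosedSemigroup S)
    (hK : IsCompact K) (hattr : AttractsBounded S K) {B : Set X}
    (hB : Bornology.IsBounded B) {t : ℕ → ℝ} (ht : Tendsto t atTop atTop) {x : ℕ → X}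
    (hx : ∀ n, x n ∈ B) {y : X} (hy : Tendsto (fun n => S (t n) (x n)) atTop (𝓝 y)) :
    y ∈ ⋂ s ≥ (0 : ℝ), S s '' K := by
  refine mem_iInter₂.2 fun s hs => ?_
  obtain ⟨w, hw, φ, hφ, hlim⟩ :=
    hattr.tendsto_subseq hK hB (tendsto_atTop_add_const_right _ (-s) ht) hx
  refine ⟨w, hw, hS.closed s hs _ w y hlim ((hy.comp hφ.tendsto_atTop).congr' ?_)⟩
  filter_upwards [(ht.comp hφ.tendsto_atTop).eventually_ge_atTop s] with n hn
  rw [Function.comp_apply] at hn ⊢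
  rw [← hS.apply_add hs (by linarith)]
  ring_nf

theorem IsClosedSemigroup.mem_iInter_image_of_forall (hS : IsClosedSemigroup S)
    (hK : IsCompact K) (hattr : AttractsBounded S K) {t : ℕ → ℝ} (ht : Tendsto t atTop atTop)
    {y : X} (hy : ∀ n, y ∈ S (t n) '' K) : y ∈ ⋂ s ≥ (0 : ℝ), S s '' K := by
  choose k hk hky using hy
  exact hS.mem_iInter_image_of_tendsto hK hattr hK.isBounded ht hk
    (tendsto_const_nhds.congr fun n => (hky n).symm)

theorem IsClosedSemigroup.image_iInter_image (hS : IsClosedSemigroup S) (hK : IsCompact K)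
    (hattr : AttractsBounded S K) {t : ℝ} (ht : 0 ≤ t) :
    S t '' ⋂ s ≥ (0 : ℝ), S s '' K = ⋂ s ≥ (0 : ℝ), S s '' K := by
  refine Subset.antisymm ?_ fun a ha => ?_
  · rintro _ ⟨a, ha, rfl⟩
    refine hS.mem_iInter_image_of_forall hK hattr
      (tendsto_atTop_add_const_left _ t tendsto_natCast_atTop_atTop) fun n => ?_
    obtain ⟨k, hk, rfl⟩ := mem_iInter₂.1 ha n n.cast_nonneg
    exact ⟨k, hk, hS.apply_add ht n.cast_nonneg k⟩
  · -- Write `a = S t (S n (k n))`; a limit point of `S n (k n)` is the required preimage.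
    choose k hk hka using fun n : ℕ => mem_iInter₂.1 ha (t + n) (by positivity)
    obtain ⟨w, -, φ, hφ, hlim⟩ :=
      hattr.tendsto_subseq hK hK.isBounded tendsto_natCast_atTop_atTop hk
    refine ⟨w, hS.mem_iInter_image_of_tendsto hK hattr hK.isBounded
      (tendsto_natCast_atTop_atTop.comp hφ.tendsto_atTop) (fun n => hk (φ n)) hlim, ?_⟩
    refine hS.closed t ht _ w a hlim (tendsto_const_nhds.congr fun n => ?_)
    rw [← hS.apply_add ht (Nat.cast_nonneg _), hka]

theorem IsClosedSemigroup.attractsBounded_iInter_image (hS : IsClosedSemigroup S)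
    (hK : IsCompact K) (hattr : AttractsBounded S K) :
    AttractsBounded S (⋂ s ≥ (0 : ℝ), S s '' K) := by
  intro B hB ε hε
  by_contra! h
  choose t ht x hx hfar using fun n : ℕ => h n
  have ht' : Tendsto t atTop atTop := tendsto_atTop_mono ht tendsto_natCast_atTop_atTop
  obtain ⟨y, -, φ, hφ, hlim⟩ := hattr.tendsto_subseq hK hB ht' hx
  have hy := hS.mem_iInter_image_of_tendsto hK hattr hB (ht'.comp hφ.tendsto_atTop)
    (fun n => hx (φ n)) hlim
  obtain ⟨n, hn⟩ := (Metric.tendsto_nhds.1 hlim ε hε).exists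
  exact (hfar (φ n) y hy).not_gt hn

theorem iInter_image_subset_of_attractsBounded (hK : Bornology.IsBounded K) {A : Set X}
    (hA : IsClosed A) (hattr : AttractsBounded S A) : ⋂ s ≥ (0 : ℝ), S s '' K ⊆ A := by
  intro a ha
  rw [← hA.closure_eq, Metric.mem_closure_iff]
  intro ε hε
  obtain ⟨T, hT⟩ := hattr K hK ε hε
  obtain ⟨k, hk, rfl⟩ := mem_iInter₂.1 ha (max T 0) (le_max_right _ _)
  exact hT _ (le_max_left _ _) k hk

theorem IsClosedSemigroup.iInter_image_eq_iInter_Ici (hS : IsClosedSemigroup S)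
    (hK : IsCompact K) (hattr : AttractsBounded S K) {T : ℝ} (hT : 0 ≤ T) :
    ⋂ s ≥ (0 : ℝ), S s '' K = ⋂ s : Ici T, S s '' K := by
  refine Subset.antisymm (fun a ha => mem_iInter.2 fun s => mem_iInter₂.1 ha s (hT.trans s.2))
    fun a ha => hS.mem_iInter_image_of_forall hK hattr
      (tendsto_atTop_add_const_left _ T tendsto_natCast_atTop_atTop) fun n => ?_
  exact mem_iInter.1 ha ⟨T + n, mem_Ici.2 (le_add_of_nonneg_right n.cast_nonneg)⟩

theorem IsClosedSemigroup.directed_image_Ici (hS : IsClosedSemigroup S) {T : ℝ} (hT : 0 ≤ T)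
    (hinv : ∀ t ≥ T, S t '' K ⊆ K) : Directed (· ⊇ ·) fun s : Ici T => S s '' K := by
  have hsub : ∀ s s' : Ici T, S (s + s') '' K ⊆ S s '' K := fun s s' => by
    rw [hS.add s (hT.trans s.2) s' (hT.trans s'.2), image_comp]
    exact image_mono (hinv s' s'.2)
  intro s s'
  refine ⟨⟨s + s', le_add_of_le_of_nonneg s.2 (hT.trans s'.2)⟩, hsub s s', ?_⟩
  simpa only [add_comm (s : ℝ)] using hsub s' s

theorem IsClosedSemigroup.isCompact_image (hS : IsClosedSemigroup S) (hK : IsCompact K)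
    {t : ℝ} (ht : 0 ≤ t) (hinv : S t '' K ⊆ K) : IsCompact (S t '' K) :=
  hK.image_of_continuousOn <|
    continuousOn_of_seq_closed_graph hK (mapsTo_iff_image_subset.2 hinv) (hS.closed t ht)

theorem IsClosedSemigroup.isConnected_image (hS : IsClosedSemigroup S) (hK : IsCompact K)
    (hKconn : IsConnected K) {t : ℝ} (ht : 0 ≤ t) (hinv : S t '' K ⊆ K) :
    IsConnected (S t '' K) :=
  hKconn.image _ <|
    continuousOn_of_seq_closed_graph hK (mapsTo_iff_image_subset.2 hinv) (hS.closed t ht)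

theorem IsClosedSemigroup.isCompact_iInter_image (hS : IsClosedSemigroup S) (hK : IsCompact K)
    (hattr : AttractsBounded S K) {T : ℝ} (hT : 0 ≤ T) (hinv : ∀ t ≥ T, S t '' K ⊆ K) :
    IsCompact (⋂ s ≥ (0 : ℝ), S s '' K) := by
  have hc (s : Ici T) : IsCompact (S s '' K) := hS.isCompact_image hK (hT.trans s.2) (hinv s s.2)
  rw [hS.iInter_image_eq_iInter_Ici hK hattr hT]
  exact (hc ⟨T, self_mem_Ici⟩).of_isClosed_subset (isClosed_iInter fun s => (hc s).isClosed)
    (iInter_subset _ _)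

theorem IsClosedSemigroup.isConnected_iInter_image (hS : IsClosedSemigroup S)
    (hK : IsCompact K) (hKconn : IsConnected K) (hattr : AttractsBounded S K) {T : ℝ}
    (hT : 0 ≤ T) (hinv : ∀ t ≥ T, S t '' K ⊆ K) :
    IsConnected (⋂ s ≥ (0 : ℝ), S s '' K) := by
  rw [hS.iInter_image_eq_iInter_Ici hK hattr hT]
  exact .iInter_of_directed_isCompact (hS.directed_image_Ici hT hinv)
    (fun s => hS.isCompact_image hK (hT.trans s.2) (hinv s s.2))
    fun s => hS.isConnected_image hK hKconn (hT.trans s.2) (hinv s s.2)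

end Semigroup

theorem stmt19_general {X : Type*} [MetricSpace X]
    (S : ℝ → X → X)
    (hsemi : ∀ s ≥ (0 : ℝ), ∀ t ≥ (0 : ℝ), S (s + t) = S s ∘ S t)
    (hclosed : ∀ t ≥ (0 : ℝ), ∀ (u : ℕ → X) (x y : X),
      Tendsto u atTop (nhds x) →
      Tendsto (fun n => S t (u n)) atTop (nhds y) → S t x = y)
    (K : Set X) (hKc : IsCompact K) (hKconn : IsConnected K)
    (hattr : ∀ B : Set X, Bornology.IsBounded B → ∀ ε > 0, ∃ T, ∀ t ≥ T,
      ∀ x ∈ B, ∃ k ∈ K, dist (S t x) k < ε)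
    (hinv : ∃ T, ∀ t ≥ T, S t '' K ⊆ K) :
    ∃ A ⊆ K, IsCompact A ∧ IsConnected A ∧ (∀ t ≥ (0 : ℝ), S t '' A = A) ∧
      (∀ B : Set X, Bornology.IsBounded B → ∀ ε > 0, ∃ T, ∀ t ≥ T,
        ∀ x ∈ B, ∃ a ∈ A, dist (S t x) a < ε) ∧
      (∀ A' : Set X, IsCompact A' →
        (∀ B : Set X, Bornology.IsBounded B → ∀ ε > 0, ∃ T, ∀ t ≥ T,
          ∀ x ∈ B, ∃ a ∈ A', dist (S t x) a < ε) → A ⊆ A') := by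
  have hS : IsClosedSemigroup S := ⟨hsemi, hclosed⟩
  obtain ⟨T, hT⟩ := hinv
  have hT₀ : ∀ t ≥ max T 0, S t '' K ⊆ K := fun t ht => hT t (le_of_max_le_left ht)
  have hT₀_nonneg : (0 : ℝ) ≤ max T 0 := le_max_right _ _
  exact ⟨⋂ s ≥ (0 : ℝ), S s '' K, (iInter₂_subset _ hT₀_nonneg).trans (hT₀ _ le_rfl),
    hS.isCompact_iInter_image hKc hattr hT₀_nonneg hT₀,
    hS.isConnected_iInter_image hKc hKconn hattr hT₀_nonneg hT₀,
    fun t ht => hS.image_iInter_image hKc hattr ht,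
    hS.attractsBounded_iInter_image hKc hattr,
    fun A' hA' hattr' => iInter_image_subset_of_attractsBounded hKc.isBounded hA'.isClosed hattr'⟩

/-- a closed semigroup on a complete metric space possessing a connected
compact attracting set `K` with `Σ(t)K ⊆ K` for all sufficiently large `t` has a connected
global attractor `A ⊆ K`: a compact, connected, fully invariant set attracting all
bounded sets, and minimal among compact attracting sets. -/
theorem stmt19 {X : Type*} [MetricSpace X] [CompleteSpace X]
    (S : ℝ → X → X)
    (hid : S 0 = id)
    (hsemi : ∀ s ≥ (0 : ℝ), ∀ t ≥ (0 : ℝ), S (s + t) = S s ∘ S t)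
    (hclosed : ∀ t ≥ (0 : ℝ), ∀ (u : ℕ → X) (x y : X),
      Tendsto u atTop (nhds x) →
      Tendsto (fun n => S t (u n)) atTop (nhds y) → S t x = y)
    (K : Set X) (hKc : IsCompact K) (hKconn : IsConnected K)
    (hattr : ∀ B : Set X, Bornology.IsBounded B → ∀ ε > 0, ∃ T, ∀ t ≥ T,
      ∀ x ∈ B, ∃ k ∈ K, dist (S t x) k < ε)
    (hinv : ∃ T, ∀ t ≥ T, S t '' K ⊆ K) :
    ∃ A ⊆ K, IsCompact A ∧ IsConnected A ∧ (∀ t ≥ (0 : ℝ), S t '' A = A) ∧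
      (∀ B : Set X, Bornology.IsBounded B → ∀ ε > 0, ∃ T, ∀ t ≥ T,
        ∀ x ∈ B, ∃ a ∈ A, dist (S t x) a < ε) ∧
      (∀ A' : Set X, IsCompact A' →
        (∀ B : Set X, Bornology.IsBounded B → ∀ ε > 0, ∃ T, ∀ t ≥ T,
          ∀ x ∈ B, ∃ a ∈ A', dist (S t x) a < ε) → A ⊆ A') :=
  stmt19_general S hsemi hclosed K hKc hKconn hattr hinv
end
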